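/- For the asymmetric digital payoff, the first-order-condition function f₂(x) = h₂'(x)·x − h₂(x), where h₂(x) = (ψ̂/(ψ̂−φ̂)) e^{φ̂(x−c)} − (φ̂/(ψ̂−φ̂)) e^{ψ̂(x−c)} with ψ̂ > 0 > φ̂, satisfies f₂(c) = −1, f₂'(x) = h₂''(x)·x, and f₂(x) → +∞ as x → −∞; hence there is a root x₂* < min(c, 0) with f₂(x₂*) = 0. -/

import Mathlib

/-!
The derivative of `f = h' x - h` is `h'' x` by the product rule, and `h(c) = 1`, `h'(c) = 0`
give `f(c) = -1`; at `x = 0` one has `f(0) = -h(0) < 0`, so `f (min c 0) < 0` in either case.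
As `x → -∞` the `e^{φ̂ (x - c)}` term of `f` blows up against the linear factor
`φ̂ ψ̂ x / (ψ̂ - φ̂) → +∞`, while the `e^{ψ̂ (x - c)}` term decays, so `f → +∞` there and the
intermediate value theorem gives the root.
-/

open Filter Real

theorem exists_lt_eq_of_tendsto_atBot_atTop {f : ℝ → ℝ} (hf : Continuous f)
    (hbot : Tendsto f atBot atTop) {a y : ℝ} (ha : f a < y) : ∃ x < a, f x = y := by
  obtain ⟨x, hxa, hfx⟩ := intermediate_value_Iic' hf.continuousOn hbot (Set.mem_Ici.2 ha.le)
  refine ⟨x, lt_of_le_of_ne hxa ?_, hfx⟩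
  rintro rfl
  exact ha.ne hfx

theorem tendsto_affine_mul_exp_atBot {k : ℝ} (hk : 0 < k) (a b c : ℝ) :
    Tendsto (fun x => (a * x + b) * exp (k * (x - c))) atBot (nhds 0) := by
  have hy : Tendsto (fun x => -(k * (x - c))) atBot atTop :=
    tendsto_neg_atBot_atTop.comp <|
      (tendsto_const_mul_atBot_of_pos hk).2 (tendsto_atBot_add_const_right _ (-c) tendsto_id)
  have hdecay : Tendsto (fun y => (a * c + b) * exp (-y) - a / k * (y * exp (-y))) atTop
      (nhds 0) := by
    simpa using (tendsto_exp_neg_atTop_nhds_zero.const_mul (a * c + b)).sub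
      ((tendsto_pow_mul_exp_neg_atTop_nhds_zero 1).const_mul (a / k))
  refine (hdecay.comp hy).congr fun x => ?_
  simp only [Function.comp_apply, neg_neg]
  field_simp
  ring

noncomputable def focFun (h : ℝ → ℝ) (x : ℝ) : ℝ := deriv h x * x - h x

theorem hasDerivAt_focFun {h : ℝ → ℝ} {x : ℝ} (hd : DifferentiableAt ℝ h x)
    (hd' : DifferentiableAt ℝ (deriv h) x) :
    HasDerivAt (focFun h) (deriv (deriv h) x * x) x :=
  ((hd'.hasDerivAt.mul (hasDerivAt_id' x)).sub hd.hasDerivAt).congr_deriv (by ring)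

theorem focFun_of_deriv_mul_eq_zero {h : ℝ → ℝ} {x : ℝ} (hx : deriv h x * x = 0) :
    focFun h x = -h x := by
  rw [focFun, hx, zero_sub]

section AsymmetricDigital

variable (ψ φ c : ℝ)

noncomputable def asymDigitalValue (x : ℝ) : ℝ :=
  ψ / (ψ - φ) * exp (φ * (x - c)) - φ / (ψ - φ) * exp (ψ * (x - c))

theorem contDiff_asymDigitalValue {n : WithTop ℕ∞} : ContDiff ℝ n (asymDigitalValue ψ φ c) := by
  unfold asymDigitalValue
  fun_prop

theorem hasDerivAt_asymDigitalValue (x : ℝ) :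
    HasDerivAt (asymDigitalValue ψ φ c)
      (ψ * φ / (ψ - φ) * (exp (φ * (x - c)) - exp (ψ * (x - c)))) x := by
  have hlin (k : ℝ) : HasDerivAt (fun y => k * (y - c)) k x := by
    simpa using ((hasDerivAt_id x).sub_const c).const_mul k
  exact (((hlin φ).exp.const_mul (ψ / (ψ - φ))).sub
    ((hlin ψ).exp.const_mul (φ / (ψ - φ)))).congr_deriv (by ring)

theorem deriv_asymDigitalValue_self : deriv (asymDigitalValue ψ φ c) c = 0 := by
  simp [(hasDerivAt_asymDigitalValue ψ φ c c).deriv]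

variable {ψ φ}

theorem asymDigitalValue_self (hψφ : φ ≠ ψ) : asymDigitalValue ψ φ c c = 1 := by
  have : ψ - φ ≠ 0 := sub_ne_zero.2 hψφ.symm
  simp only [asymDigitalValue, sub_self, mul_zero, exp_zero, mul_one]
  field_simp

theorem asymDigitalValue_pos (hψ : 0 < ψ) (hφ : φ < 0) (x : ℝ) : 0 < asymDigitalValue ψ φ c x := by
  have hA : 0 < ψ / (ψ - φ) := div_pos hψ (by linarith)
  have hB : φ / (ψ - φ) < 0 := div_neg_of_neg_of_pos hφ (by linarith)
  unfold asymDigitalValue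
  nlinarith [exp_pos (φ * (x - c)), exp_pos (ψ * (x - c))]

theorem tendsto_focFun_asymDigitalValue_atBot (hψ : 0 < ψ) (hφ : φ < 0) :
    Tendsto (focFun (asymDigitalValue ψ φ c)) atBot atTop := by
  set κ := ψ * φ / (ψ - φ)
  have hκ : κ < 0 := div_neg_of_neg_of_pos (mul_neg_of_pos_of_neg hψ hφ) (by linarith)
  have hgrow : Tendsto (fun x => exp (φ * (x - c)) * (κ * x - ψ / (ψ - φ))) atBot atTop := by
    refine Tendsto.atTop_mul_atTop₀ (tendsto_exp_atTop.comp ?_) ?_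
    · exact (tendsto_const_mul_atTop_of_neg hφ).2 (tendsto_atBot_add_const_right _ (-c) tendsto_id)
    · exact tendsto_atTop_add_const_right _ _ ((tendsto_const_mul_atTop_of_neg hκ).2 tendsto_id)
  have hdecay := (tendsto_affine_mul_exp_atBot hψ κ (-(φ / (ψ - φ))) c).neg
  refine (hgrow.atTop_add (neg_zero (G := ℝ) ▸ hdecay)).congr fun x => ?_
  rw [focFun, (hasDerivAt_asymDigitalValue ψ φ c x).deriv, asymDigitalValue]
  ring

end AsymmetricDigital

theorem stmt_17 (ψ φ c : ℝ) (hψ : 0 < ψ) (hφ : φ < 0)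
    (h₂ f₂ : ℝ → ℝ)
    (hh₂ : ∀ x, h₂ x = ψ / (ψ - φ) * Real.exp (φ * (x - c))
                     - φ / (ψ - φ) * Real.exp (ψ * (x - c)))
    (hf₂ : ∀ x, f₂ x = deriv h₂ x * x - h₂ x) :
    f₂ c = -1 ∧
    (∀ x, deriv f₂ x = deriv (deriv h₂) x * x) ∧
    Tendsto f₂ atBot atTop ∧
    ∃ x : ℝ, x < min c 0 ∧ f₂ x = 0 := by
  obtain rfl : h₂ = asymDigitalValue ψ φ c := funext hh₂
  obtain rfl : f₂ = focFun (asymDigitalValue ψ φ c) := funext hf₂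
  have hsmooth : ContDiff ℝ 2 (asymDigitalValue ψ φ c) := contDiff_asymDigitalValue ψ φ c
  have hderiv (x : ℝ) := hasDerivAt_focFun (hsmooth.differentiable two_ne_zero x)
    (hsmooth.differentiable_deriv_two x)
  have hfoc_eq_neg : ∀ x ∈ ({c, 0} : Set ℝ),
      focFun (asymDigitalValue ψ φ c) x = -asymDigitalValue ψ φ c x := by
    rintro x (rfl | rfl)
    · exact focFun_of_deriv_mul_eq_zero (by rw [deriv_asymDigitalValue_self, zero_mul])
    · exact focFun_of_deriv_mul_eq_zero (mul_zero _)
  have hbot := tendsto_focFun_asymDigitalValue_atBot c hψ hφ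
  refine ⟨?_, fun x => (hderiv x).deriv, hbot, ?_⟩
  · rw [hfoc_eq_neg c (by simp), asymDigitalValue_self c (by linarith)]
  · have hmin : min c 0 ∈ ({c, 0} : Set ℝ) := by rcases min_choice c 0 with h | h <;> simp [h]
    refine exists_lt_eq_of_tendsto_atBot_atTop
      (continuous_iff_continuousAt.2 fun x => (hderiv x).continuousAt) hbot ?_
    rw [hfoc_eq_neg _ hmin, neg_neg_iff_pos]
    exact asymDigitalValue_pos c hψ hφ _
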